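/- Let (C,λ) be a (p⁺,N₀)-divergent LMC such that additionally inf{ P⁺(s) : λ(s) > N₀ } > 0, with F, α, 1/2 < p < p⁺, and C' the biased chain of (C,F) →^α (W^p,[0,N₀]). Then for every T ⊆ F, C' is decisive w.r.t. T and, from every state, the expected time to reach T ∪ Av_{C'}(T) is finite. -/

import Mathlib

/-!
Above level `N₀` the walk abstraction takes the gambler's ruin value `((1 - p) / p) ^ (n - N₀)`,
and divergence gives the strengthened monotony estimate `1 - h(s) ≥ ν (P⁻(s) + P⁺(s)) ≥ ν c`: from
every state above `N₀` the biased chain jumps to `s₋ ∈ Av(T)` with probability at least `ν c`. The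
states of level at most `N₀` are finitely many and each reaches `T ∪ Av(T)` with positive
probability, hence all of them do so within a common number `K` of steps with probability at
least some `ε > 0`. With such a uniform bound the probability of avoiding `T ∪ Av(T)` during `n`
steps decays geometrically in `n`, which gives both decisiveness and a finite expected hitting
time.
-/

open scoped ENNReal NNReal BigOperators
open Filter

noncomputable section

variable {S : Type*}

/-- Probability of following a finite path (list of successive states). -/
def pathProb (P : S → S → ℝ≥0∞) : List S → ℝ≥0∞
  | [] => 1
  | [_] => 1
  | a :: b :: l => P a b * pathProb P (b :: l)

/-- `l` is a finite path starting at `s` that visits `T` for the first time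
at its last element. -/
def FirstHitPath (T : Set S) (s : S) (l : List S) : Prop :=
  l.head? = some s ∧ ∃ h : l ≠ [], l.getLast h ∈ T ∧
    ∀ i : Fin l.length, (i : ℕ) + 1 < l.length → l.get i ∉ T

/-- Probability of eventually reaching `T` from `s`. -/
def reachProb (P : S → S → ℝ≥0∞) (T : Set S) (s : S) : ℝ≥0∞ :=
  ∑' l : {l : List S // FirstHitPath T s l}, pathProb P (l : List S)

/-- The avoid set: states from which `T` is unreachable. -/
def Av (P : S → S → ℝ≥0∞) (T : Set S) : Set S := {s | reachProb P T s = 0}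

/-- Probability that, starting from `s`, the chain stays outside `R`
during its first `n` steps (i.e. the hitting time of `R` is `> n`). -/
def surviveProb (P : S → S → ℝ≥0∞) (R : Set S) (s : S) (n : ℕ) : ℝ≥0∞ :=
  ∑' l : {l : List S // l.length = n + 1 ∧ l.head? = some s ∧ ∀ x ∈ l, x ∉ R},
    pathProb P (l : List S)

/-- Expected hitting time of `R` from `s`, via `E τ = ∑_{n≥0} Pr(τ > n)`. -/
def expHittingTime (P : S → S → ℝ≥0∞) (R : Set S) (s : S) : ℝ≥0∞ :=
  ∑' n : ℕ, surviveProb P R s n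

/-- Probability that `X_i ∈ A` for all `i ≥ m`, starting from `s`
(as the infimum over finite horizons). -/
def confineProb (P : S → S → ℝ≥0∞) (A : Set S) (s : S) (m : ℕ) : ℝ≥0∞ :=
  ⨅ n : ℕ, ∑' l : {l : List S // l.length = n + 1 ∧ l.head? = some s ∧
      ∀ i : Fin l.length, m ≤ (i : ℕ) → l.get i ∈ A}, pathProb P (l : List S)

/-- Expected reward collected at the first visit of `T`. -/
def expReward (P : S → S → ℝ≥0∞) (L : List S → ℝ≥0∞) (T : Set S) (s : S) : ℝ≥0∞ :=
  ∑' l : {l : List S // FirstHitPath T s l}, L l * pathProb P (l : List S)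

/-- `P` is a stochastic matrix. -/
def IsStochastic (P : S → S → ℝ≥0∞) : Prop := ∀ s, ∑' s', P s s' = 1

/-- States of the biased chain other than `s₋`. -/
abbrev SA (P : S → S → ℝ≥0∞) (F : Set S) := {s : S // s ∉ Av P F}

/-- `P'` (on `(S ∖ Av(F)) ⊎ {s₋}`, with `none = s₋`) is a biased Markov chain
of `(C, T, F)`. -/
def IsBiased (P : S → S → ℝ≥0∞) (T F : Set S)
    (P' : Option (SA P F) → Option (SA P F) → ℝ≥0∞) : Prop :=
  IsStochastic P' ∧
  P' none none = 1 ∧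
  (∀ s : SA P F, s.val ∈ T → P' (some s) (some s) = 1) ∧
  (∀ s s' : SA P F, 0 < P s.val s'.val → 0 < P' (some s) (some s'))

/-- `(C^•, F^•)` together with `α` is an abstraction of `(C, F)`. -/
def IsAbstraction (P : S → S → ℝ≥0∞) (F : Set S)
    {S' : Type*} (P' : S' → S' → ℝ≥0∞) (F' : Set S')
    (α : SA P F → S') : Prop :=
  (∀ s : SA P F, s.val ∈ F → α s ∈ F') ∧
  (∀ s : SA P F, s.val ∉ F →
    ∑' s' : SA P F, P s.val s'.val * reachProb P' F' (α s')
      ≤ reachProb P' F' (α s))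

/-- The decreasing ratio `h(s)` of an abstraction. -/
def hRatio (P : S → S → ℝ≥0∞) (F : Set S)
    {S' : Type*} (P' : S' → S' → ℝ≥0∞) (F' : Set S')
    (α : SA P F → S') (s : SA P F) : ℝ≥0∞ :=
  (∑' s' : SA P F, P s.val s'.val * reachProb P' F' (α s'))
    / reachProb P' F' (α s)

/-- The biased Markov chain constructed from an abstraction. -/
def biasedKernel (P : S → S → ℝ≥0∞) (F : Set S)
    {S' : Type*} (P' : S' → S' → ℝ≥0∞) (F' : Set S')
    (α : SA P F → S') :
    Option (SA P F) → Option (SA P F) → ℝ≥0∞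
  | none, none => 1
  | none, some _ => 0
  | some s, none => 1 - hRatio P F P' F' α s
  | some s, some s' =>
      P s.val s'.val * reachProb P' F' (α s') / reachProb P' F' (α s)

/-- The random walk `W^p` on `ℕ`: `0` absorbing, up with probability `p`,
down with probability `1 - p`. -/
def walkKernel (p : ℝ≥0∞) : ℕ → ℕ → ℝ≥0∞ := fun m n =>
  if m = 0 then (if n = 0 then 1 else 0)
  else if n = m + 1 then p
  else if n + 1 = m then 1 - p
  else 0

/-- `(C, λ)` is a layered Markov chain. -/
def IsLMC (P : S → S → ℝ≥0∞) (lam : S → ℕ) : Prop :=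
  (∀ s s', 0 < P s s' → (lam s : ℤ) ≤ (lam s' : ℤ) + 1) ∧
  (∀ n : ℕ, {s : S | lam s = n}.Finite)

/-- Total probability of increasing the level. -/
def Pup (P : S → S → ℝ≥0∞) (lam : S → ℕ) (s : S) : ℝ≥0∞ :=
  ∑' s' : {s' : S // lam s < lam s'}, P s s'

/-- Total probability of decreasing the level (by one). -/
def Pdown (P : S → S → ℝ≥0∞) (lam : S → ℕ) (s : S) : ℝ≥0∞ :=
  ∑' s' : {s' : S // lam s' + 1 = lam s}, P s s'

/-- Total probability of keeping the same level. -/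
def Peq (P : S → S → ℝ≥0∞) (lam : S → ℕ) (s : S) : ℝ≥0∞ :=
  ∑' s' : {s' : S // lam s' = lam s}, P s s'

/-- `(C, λ)` is `(p⁺, N₀)`-divergent. -/
def Divergent (P : S → S → ℝ≥0∞) (lam : S → ℕ) (pplus : ℝ≥0∞) (N₀ : ℕ) : Prop :=
  1/2 < pplus ∧ ∀ s : S, N₀ < lam s → Peq P lam s < 1 →
    pplus ≤ Pup P lam s / (Pdown P lam s + Pup P lam s)

end

open Topology

lemma ENNReal.tsum_option {α : Type*} (f : Option α → ℝ≥0∞) :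
    ∑' o, f o = f none + ∑' a, f (some a) := by
  rw [← (Equiv.optionEquivSumPUnit.{0} α).symm.tsum_eq f,
    Summable.tsum_sum ENNReal.summable ENNReal.summable, add_comm]
  simp

lemma ENNReal.div_add_le_one {a b x : ℝ≥0∞} (hx0 : x ≠ 0) (hxt : x ≠ ⊤) (h : a + b * x ≤ x) :
    a / x + b ≤ 1 :=
  calc a / x + b = (a + b * x) / x := by rw [ENNReal.add_div, ENNReal.mul_div_cancel_right hx0 hxt]
    _ ≤ x / x := by gcongr
    _ = 1 := ENNReal.div_self hx0 hxt

lemma ENNReal.tsum_iSup_of_monotone {ι : Type*} (g : ℕ → ι → ℝ≥0∞)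
    (hg : ∀ i, Monotone fun n => g n i) : ∑' i, ⨆ n, g n i = ⨆ n, ∑' i, g n i := by
  refine le_antisymm ?_ (iSup_le fun n => ENNReal.tsum_le_tsum fun i => le_iSup (g · i) n)
  rw [ENNReal.tsum_eq_iSup_sum]
  refine iSup_le fun A => ?_
  rw [ENNReal.finsetSum_iSup_of_monotone hg]
  exact iSup_mono fun n => ENNReal.sum_le_tsum A

lemma ENNReal.tsum_pow_div_lt_top {θ : ℝ≥0∞} (hθ : θ < 1) {K : ℕ} (hK : 0 < K) :
    ∑' n : ℕ, θ ^ (n / K) < ⊤ := by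
  have : NeZero K := ⟨hK.ne'⟩
  calc ∑' n : ℕ, θ ^ (n / K) = ∑' q : ℕ × Fin K, θ ^ q.1 :=
        (Nat.divModEquiv K).tsum_eq fun q => θ ^ q.1
    _ = K * (1 - θ)⁻¹ := by
        simp [ENNReal.tsum_prod', ENNReal.tsum_mul_left, ENNReal.tsum_geometric]
    _ < ⊤ := ENNReal.mul_lt_top (by simp) (ENNReal.inv_lt_top.2 (tsub_pos_of_lt hθ))

lemma ENNReal.toReal_convex_comb {p x y z : ℝ≥0∞} (hp : p ≤ 1) (hy : y ≠ ⊤) (hz : z ≠ ⊤)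
    (h : x = p * y + (1 - p) * z) : x.toReal = p.toReal * y.toReal + (1 - p.toReal) * z.toReal := by
  have hp' : p ≠ ⊤ := ne_top_of_le_ne_top ENNReal.one_ne_top hp
  rw [h, ENNReal.toReal_add (by finiteness) (by finiteness), ENNReal.toReal_mul, ENNReal.toReal_mul,
    ENNReal.toReal_sub_of_le hp ENNReal.one_ne_top, ENNReal.toReal_one]

section PathSums

variable {σ : Type*}

/-- First-step decomposition of a sum over paths starting at `s`. -/
lemma tsum_pathProb_eq_tsum_mul (P : σ → σ → ℝ≥0∞) (s : σ) {D : List σ → Prop}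
    {E : σ → List σ → Prop} (hD : ∀ l, D l → l.head? = some s)
    (hne : ∀ t, D (s :: t) → t ≠ []) (hDE : ∀ s' t, t.head? = some s' ∧ D (s :: t) ↔ E s' t) :
    ∑' l : {l // D l}, pathProb P l = ∑' s', P s s' * ∑' t : {t // E s' t}, pathProb P t := by
  have hcons : ∀ l, D l → s :: l.tail = l := fun l hl => List.cons_head?_tail (hD l hl)
  let tails : {t // D (s :: t)} ≃ {l // D l} :=
    { toFun t := ⟨s :: t, t.2⟩
      invFun l := ⟨l.1.tail, (hcons _ l.2).symm ▸ l.2⟩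
      left_inv _ := rfl
      right_inv l := Subtype.ext (hcons _ l.2) }
  let heads : (Σ s', {t // E s' t}) ≃ {t // D (s :: t)} :=
    { toFun x := ⟨x.2, ((hDE x.1 x.2).2 x.2.2).2⟩
      invFun t := ⟨t.1.head (hne _ t.2), t.1, (hDE _ _).1 ⟨List.head?_eq_some_head _, t.2⟩⟩
      left_inv x := by
        refine Sigma.subtype_ext ?_ rfl
        have h := ((hDE x.1 x.2).2 x.2.2).1
        rw [List.head?_eq_some_head (hne _ ((hDE x.1 x.2).2 x.2.2).2)] at h
        exact Option.some.inj h
      right_inv _ := rfl }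
  have hstep : ∀ s' t, t.head? = some s' → pathProb P (s :: t) = P s s' * pathProb P t := by
    intro s' t ht
    rw [← List.cons_head?_tail ht]
    rfl
  calc ∑' l : {l // D l}, pathProb P l
      = ∑' x : Σ s', {t // E s' t}, pathProb P (s :: x.2) :=
        ((heads.trans tails).tsum_eq (fun l : {l // D l} => pathProb P l)).symm
    _ = ∑' s', ∑' t : {t // E s' t}, pathProb P (s :: t) := ENNReal.tsum_sigma' _
    _ = ∑' s', P s s' * ∑' t : {t // E s' t}, pathProb P t := by
        refine tsum_congr fun s' => ?_
        rw [← ENNReal.tsum_mul_left]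
        exact tsum_congr fun t => hstep s' t ((hDE s' t).2 t.2).1

end PathSums

section FirstHit

variable {σ : Type*} {T : Set σ} {s : σ}

lemma firstHitPath_iff_of_mem (hs : s ∈ T) {l : List σ} : FirstHitPath T s l ↔ l = [s] := by
  constructor
  · rintro ⟨hhead, hne, -, hnot⟩
    obtain ⟨u, rfl⟩ := List.head?_eq_some_iff.1 hhead
    cases u with
    | nil => rfl
    | cons a u => exact absurd hs (hnot ⟨0, by simp⟩ (by simp))
  · rintro rfl
    exact ⟨rfl, List.cons_ne_nil _ _, hs, fun i hi => by simp at hi⟩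

lemma firstHitPath_cons_iff (hs : s ∉ T) {s' : σ} {t : List σ} (ht : t.head? = some s') :
    FirstHitPath T s (s :: t) ↔ FirstHitPath T s' t := by
  obtain ⟨u, rfl⟩ := List.head?_eq_some_iff.1 ht
  simp [FirstHitPath, Fin.forall_fin_succ, hs]

lemma FirstHitPath.tail_ne_nil (hs : s ∉ T) {t : List σ} (h : FirstHitPath T s (s :: t)) :
    t ≠ [] := by
  rintro rfl
  exact hs h.2.2.1

end FirstHit

section Hitting

variable {σ : Type*} (P : σ → σ → ℝ≥0∞) (T : Set σ)

noncomputable def reachProbWithin (s : σ) (n : ℕ) : ℝ≥0∞ :=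
  ∑' l : {l : List σ // FirstHitPath T s l ∧ l.length ≤ n + 1}, pathProb P l

variable {P T}

lemma reachProbWithin_of_mem {s : σ} (hs : s ∈ T) (n : ℕ) : reachProbWithin P T s n = 1 := by
  have h : ∀ l : List σ, FirstHitPath T s l ∧ l.length ≤ n + 1 ↔ l ∈ ({[s]} : Set (List σ)) :=
    fun l => by simp +contextual [firstHitPath_iff_of_mem hs]
  exact ((Equiv.subtypeEquivRight h).tsum_eq fun l : ({[s]} : Set (List σ)) => pathProb P l).trans
    (tsum_singleton [s] (pathProb P))

lemma reachProbWithin_zero {s : σ} (hs : s ∉ T) : reachProbWithin P T s 0 = 0 := by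
  have : IsEmpty {l : List σ // FirstHitPath T s l ∧ l.length ≤ 0 + 1} := by
    refine ⟨fun ⟨l, hl, hlen⟩ => ?_⟩
    obtain ⟨u, rfl⟩ := List.head?_eq_some_iff.1 hl.1
    obtain rfl : u = [] := List.eq_nil_of_length_eq_zero (by simpa using hlen)
    exact hs hl.2.2.1
  exact tsum_empty

lemma reachProbWithin_succ {s : σ} (hs : s ∉ T) (n : ℕ) :
    reachProbWithin P T s (n + 1) = ∑' s', P s s' * reachProbWithin P T s' n :=
  tsum_pathProb_eq_tsum_mul P s (fun _ hl => hl.1.1) (fun _ ht => ht.1.tail_ne_nil hs)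
    fun s' t => ⟨fun ⟨ht, hfh, hlen⟩ => ⟨(firstHitPath_cons_iff hs ht).1 hfh, by simpa using hlen⟩,
      fun ⟨hfh, hlen⟩ => ⟨hfh.1, (firstHitPath_cons_iff hs hfh.1).2 hfh, by simpa using hlen⟩⟩

lemma monotone_reachProbWithin (s : σ) : Monotone (reachProbWithin P T s) := fun _ _ hnm =>
  ENNReal.tsum_mono_subtype (pathProb P) fun _ hl => ⟨hl.1, hl.2.trans (by omega)⟩

lemma surviveProb_of_mem {s : σ} (hs : s ∈ T) (n : ℕ) : surviveProb P T s n = 0 := by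
  have : IsEmpty {l : List σ // l.length = n + 1 ∧ l.head? = some s ∧ ∀ x ∈ l, x ∉ T} :=
    ⟨fun ⟨_, _, hl, hout⟩ => hout s (List.mem_of_mem_head? hl) hs⟩
  exact tsum_empty

lemma surviveProb_zero {s : σ} (hs : s ∉ T) : surviveProb P T s 0 = 1 := by
  have h : ∀ l : List σ, (l.length = 0 + 1 ∧ l.head? = some s ∧ ∀ x ∈ l, x ∉ T) ↔
      l ∈ ({[s]} : Set (List σ)) := by
    intro l
    refine ⟨fun ⟨hlen, hl, _⟩ => ?_, ?_⟩
    · obtain ⟨u, rfl⟩ := List.head?_eq_some_iff.1 hl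
      simpa using hlen
    · rintro rfl
      simpa using hs
  exact ((Equiv.subtypeEquivRight h).tsum_eq fun l : ({[s]} : Set (List σ)) => pathProb P l).trans
    (tsum_singleton [s] (pathProb P))

lemma surviveProb_succ {s : σ} (hs : s ∉ T) (n : ℕ) :
    surviveProb P T s (n + 1) = ∑' s', P s s' * surviveProb P T s' n :=
  tsum_pathProb_eq_tsum_mul P s (fun _ hl => hl.2.1)
    (fun t ht => List.ne_nil_of_length_pos (by simp at ht; omega))
    fun s' t => by
      simp only [List.length_cons, List.head?_cons, List.mem_cons, forall_eq_or_imp]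
      grind

lemma reachProbWithin_add_surviveProb (hP : IsStochastic P) (n : ℕ) (s : σ) :
    reachProbWithin P T s n + surviveProb P T s n = 1 := by
  induction n generalizing s with
  | zero =>
    by_cases hs : s ∈ T
    · simp [reachProbWithin_of_mem hs, surviveProb_of_mem hs]
    · simp [reachProbWithin_zero hs, surviveProb_zero hs]
  | succ n ih =>
    by_cases hs : s ∈ T
    · simp [reachProbWithin_of_mem hs, surviveProb_of_mem hs]
    · simp only [reachProbWithin_succ hs, surviveProb_succ hs, ← ENNReal.tsum_add, ← mul_add, ih,
        mul_one, hP s]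

lemma reachProbWithin_le_one (hP : IsStochastic P) (s : σ) (n : ℕ) :
    reachProbWithin P T s n ≤ 1 :=
  (reachProbWithin_add_surviveProb hP n s).symm ▸ le_self_add

end Hitting

section Reach

variable {σ : Type*} {P : σ → σ → ℝ≥0∞} {T : Set σ}

lemma reachProb_eq_iSup (s : σ) : reachProb P T s = ⨆ n, reachProbWithin P T s n := by
  let A : ℕ → Set (List σ) := fun n => {l | FirstHitPath T s l ∧ l.length ≤ n + 1}
  have hA : {l | FirstHitPath T s l} = ⋃ n, A n :=
    Set.ext fun l => ⟨fun h => Set.mem_iUnion.2 ⟨l.length, h, by omega⟩,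
      fun h => (Set.mem_iUnion.1 h).elim fun _ h => h.1⟩
  calc reachProb P T s = ∑' l, (⋃ n, A n).indicator (pathProb P) l := by
        rw [← hA]; exact tsum_subtype {l | FirstHitPath T s l} (pathProb P)
    _ = ∑' l, ⨆ n, (A n).indicator (pathProb P) l := by
        simp only [Set.indicator_iUnion_apply bot_eq_zero]
    _ = ⨆ n, ∑' l, (A n).indicator (pathProb P) l :=
        ENNReal.tsum_iSup_of_monotone _ fun l n m hnm =>
          Set.indicator_le_indicator_of_subset (s := A n) (t := A m)
            (fun _ h => ⟨h.1, h.2.trans (by omega)⟩)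
            (fun _ => zero_le) l
    _ = ⨆ n, reachProbWithin P T s n := by simp only [A, ← tsum_subtype]; rfl

lemma reachProbWithin_le_reachProb (s : σ) (n : ℕ) : reachProbWithin P T s n ≤ reachProb P T s :=
  reachProb_eq_iSup (P := P) s ▸ le_iSup _ n

lemma reachProb_of_mem {s : σ} (hs : s ∈ T) : reachProb P T s = 1 := by
  simp [reachProb_eq_iSup, reachProbWithin_of_mem hs]

lemma reachProb_le_one (hP : IsStochastic P) (s : σ) : reachProb P T s ≤ 1 :=
  reachProb_eq_iSup (P := P) s ▸ iSup_le (reachProbWithin_le_one hP s)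

lemma reachProb_eq_tsum {s : σ} (hs : s ∉ T) :
    reachProb P T s = ∑' s', P s s' * reachProb P T s' := by
  calc reachProb P T s = ⨆ n, reachProbWithin P T s (n + 1) := by
        rw [reachProb_eq_iSup]
        exact ((monotone_reachProbWithin s).iSup_comp_tendsto_atTop
          (tendsto_add_atTop_nat 1)).symm
    _ = ⨆ n, ∑' s', P s s' * reachProbWithin P T s' n := by
        simp only [reachProbWithin_succ hs]
    _ = ∑' s', P s s' * reachProb P T s' := by
        rw [← ENNReal.tsum_iSup_of_monotone (fun n s' => P s s' * reachProbWithin P T s' n)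
          fun s' _ _ hnm => mul_le_mul_right (monotone_reachProbWithin s' hnm) _]
        simp only [← ENNReal.mul_iSup, ← reachProb_eq_iSup]

lemma reachProb_le_of_superharmonic {g : σ → ℝ≥0∞} (hT : ∀ s ∈ T, 1 ≤ g s)
    (hg : ∀ s ∉ T, ∑' s', P s s' * g s' ≤ g s) (s : σ) : reachProb P T s ≤ g s := by
  suffices h : ∀ n s, reachProbWithin P T s n ≤ g s from
    reachProb_eq_iSup (P := P) s ▸ iSup_le fun n => h n s
  intro n
  induction n with
  | zero =>
    intro s
    by_cases hs : s ∈ T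
    · simpa [reachProbWithin_of_mem hs] using hT s hs
    · simp [reachProbWithin_zero hs]
  | succ n ih =>
    intro s
    by_cases hs : s ∈ T
    · simpa [reachProbWithin_of_mem hs] using hT s hs
    · rw [reachProbWithin_succ hs]
      exact (ENNReal.tsum_le_tsum fun s' => mul_le_mul_right (ih s') _).trans (hg s hs)

lemma tsum_mul_le_one (hP : IsStochastic P) {g : σ → ℝ≥0∞} (hg : ∀ s, g s ≤ 1) (s : σ) :
    ∑' s', P s s' * g s' ≤ 1 :=
  (ENNReal.tsum_le_tsum fun s' => mul_le_of_le_one_right' (hg s')).trans (hP s).le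

lemma reachProb_mono (hP : IsStochastic P) {R : Set σ} (hTR : T ⊆ R) (s : σ) :
    reachProb P T s ≤ reachProb P R s := by
  refine reachProb_le_of_superharmonic (fun s hs => (reachProb_of_mem (hTR hs)).ge)
    (fun s _ => ?_) s
  by_cases hs : s ∈ R
  · rw [reachProb_of_mem hs]; exact tsum_mul_le_one hP (reachProb_le_one hP) s
  · exact (reachProb_eq_tsum hs).ge

lemma reachProb_eq_zero_of_closed (hP : IsStochastic P) {A : Set σ}
    (hA : ∀ a ∈ A, ∀ b ∉ A, P a b = 0) (hAT : Disjoint A T) {a : σ} (ha : a ∈ A) :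
    reachProb P T a = 0 := by
  refine le_zero_iff.1 <| (reachProb_le_of_superharmonic (g := Aᶜ.indicator 1) ?_ ?_ a).trans_eq
    (Set.indicator_of_notMem (Set.notMem_compl_iff.2 ha) _)
  · intro s hs
    simp [Set.indicator_of_mem (Set.mem_compl (hAT.notMem_of_mem_right hs))]
  · intro s _
    by_cases hs : s ∈ A
    · refine (ENNReal.tsum_eq_zero.2 fun s' => ?_).trans_le zero_le
      by_cases hs' : s' ∈ A
      · simp [hs']
      · simp [hA s hs s' hs']
    · rw [Set.indicator_of_mem (Set.mem_compl hs)]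
      exact tsum_mul_le_one hP (fun s' => Set.indicator_le_self' (fun _ _ => zero_le) s') s

lemma reachProb_union_av_ne_zero (hP : IsStochastic P) (s : σ) :
    reachProb P (T ∪ Av P T) s ≠ 0 := by
  by_cases hs : s ∈ Av P T
  · rw [reachProb_of_mem (Set.mem_union_right T hs)]; exact one_ne_zero
  · exact fun h => hs (le_zero_iff.1 (h ▸ reachProb_mono hP Set.subset_union_left s))

end Reach

section Decisive

variable {σ : Type*} {P : σ → σ → ℝ≥0∞} {R : Set σ}

lemma surviveProb_eq_one_sub (hP : IsStochastic P) (s : σ) (n : ℕ) :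
    surviveProb P R s n = 1 - reachProbWithin P R s n :=
  ENNReal.eq_sub_of_add_eq ((reachProbWithin_le_one hP s n).trans_lt ENNReal.one_lt_top).ne
    ((add_comm _ _).trans (reachProbWithin_add_surviveProb hP n s))

lemma antitone_surviveProb (hP : IsStochastic P) (s : σ) : Antitone (surviveProb P R s) :=
  fun _ _ hnm => by
    simp only [surviveProb_eq_one_sub hP]
    exact tsub_le_tsub_left (monotone_reachProbWithin s hnm) 1

lemma surviveProb_add_le (a b : ℕ) (s : σ) :
    surviveProb P R s (a + b) ≤ surviveProb P R s a * ⨆ x, surviveProb P R x b := by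
  induction a generalizing s with
  | zero =>
    by_cases hs : s ∈ R
    · simp [surviveProb_of_mem hs]
    · simpa [surviveProb_zero hs] using le_iSup (surviveProb P R · b) s
  | succ a ih =>
    by_cases hs : s ∈ R
    · simp [surviveProb_of_mem hs]
    · rw [Nat.add_right_comm, surviveProb_succ hs, surviveProb_succ hs, ← ENNReal.tsum_mul_right]
      exact ENNReal.tsum_le_tsum fun s' => (mul_le_mul_right (ih s') _).trans_eq (mul_assoc ..).symm

lemma surviveProb_mul_le_pow (hP : IsStochastic P) {K : ℕ} {θ : ℝ≥0∞}
    (hθ : ∀ x, surviveProb P R x K ≤ θ) (m : ℕ) (s : σ) : surviveProb P R s (m * K) ≤ θ ^ m := by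
  induction m generalizing s with
  | zero => simpa using (reachProbWithin_add_surviveProb hP 0 s).symm ▸ le_add_self
  | succ m ih =>
    rw [Nat.succ_mul, pow_succ]
    exact (surviveProb_add_le _ _ s).trans (mul_le_mul' (ih s) (iSup_le hθ))

lemma surviveProb_le_pow_div (hP : IsStochastic P) {K : ℕ} {ε : ℝ≥0∞}
    (h : ∀ x ∉ R, ε ≤ reachProbWithin P R x K) (s : σ) (n : ℕ) :
    surviveProb P R s n ≤ (1 - ε) ^ (n / K) := by
  refine (antitone_surviveProb hP s (Nat.div_mul_le_self n K)).trans
    (surviveProb_mul_le_pow hP (fun x => ?_) _ s)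
  by_cases hx : x ∈ R
  · simp [surviveProb_of_mem hx]
  · rw [surviveProb_eq_one_sub hP]
    exact tsub_le_tsub_left (h x hx) 1

/-- The probability of avoiding `R` during `n` steps is at most `(1 - ε) ^ (n / K)`. -/
theorem reachProb_eq_one_and_expHittingTime_lt_top_of_le_reachProbWithin (hP : IsStochastic P)
    {K : ℕ} (hK : 0 < K) {ε : ℝ≥0∞} (hε : 0 < ε) (h : ∀ x ∉ R, ε ≤ reachProbWithin P R x K)
    (s : σ) : reachProb P R s = 1 ∧ expHittingTime P R s < ⊤ := by
  have hθ : 1 - ε < 1 := ENNReal.sub_lt_self ENNReal.one_ne_top one_ne_zero hε.ne'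
  have hsurv := surviveProb_le_pow_div hP h s
  refine ⟨le_antisymm (reachProb_le_one hP s) ?_, ?_⟩
  · have hlim : Tendsto (fun n => (1 - ε) ^ (n / K)) atTop (𝓝 0) :=
      (ENNReal.tendsto_pow_atTop_nhds_zero_of_lt_one hθ).comp (Nat.tendsto_div_const_atTop hK.ne')
    have h0 : 1 - reachProb P R s ≤ 0 := ge_of_tendsto' hlim fun n =>
      (tsub_le_tsub_left (reachProbWithin_le_reachProb s n) 1).trans
        ((surviveProb_eq_one_sub hP s n).symm.le.trans (hsurv n))
    exact tsub_eq_zero_iff_le.1 (le_zero_iff.1 h0)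
  · exact (ENNReal.tsum_le_tsum hsurv).trans_lt (ENNReal.tsum_pow_div_lt_top hθ hK)

end Decisive

section Attractor

variable {σ : Type*} {P : σ → σ → ℝ≥0∞} {T : Set σ}

lemma le_reachProbWithin_one {R : Set σ} {x y : σ} (hx : x ∉ R) (hy : y ∈ R) :
    P x y ≤ reachProbWithin P R x 1 := by
  rw [reachProbWithin_succ hx]
  calc P x y = P x y * reachProbWithin P R y 0 := by rw [reachProbWithin_of_mem hy, mul_one]
    _ ≤ _ := ENNReal.le_tsum y

/-- Every state reaches `T ∪ Av P T` with positive probability; `G` being finite, this holds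
uniformly on `G` within a common number of steps. -/
theorem reachProb_eq_one_and_expHittingTime_lt_top_of_finite (hP : IsStochastic P) {G : Set σ}
    (hG : G.Finite) {δ : ℝ≥0∞} (hδ : 0 < δ)
    (hout : ∀ x ∉ G, x ∉ T ∪ Av P T → ∃ y ∈ T ∪ Av P T, δ ≤ P x y) (s : σ) :
    reachProb P (T ∪ Av P T) s = 1 ∧ expHittingTime P (T ∪ Av P T) s < ⊤ := by
  set R := T ∪ Av P T
  have hev : ∀ᶠ n in atTop, ∀ x ∈ G, 0 < reachProbWithin P R x n :=
    (eventually_all_finite hG).2 fun x _ =>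
      (tendsto_atTop_iSup (monotone_reachProbWithin x)).eventually_const_lt
        (pos_iff_ne_zero.2 (reachProb_eq_iSup (P := P) x ▸ reachProb_union_av_ne_zero hP x))
  obtain ⟨K, hK, hKG⟩ := ((eventually_ge_atTop 1).and hev).exists
  set ε := hG.toFinset.inf (reachProbWithin P R · K)
  have hε : 0 < ε :=
    (Finset.lt_inf_iff ENNReal.zero_lt_top).2 fun x hx => hKG x (hG.mem_toFinset.1 hx)
  refine reachProb_eq_one_and_expHittingTime_lt_top_of_le_reachProbWithin hP hK (lt_min hδ hε)
    (fun x hx => ?_) s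
  by_cases hxG : x ∈ G
  · exact (min_le_right _ _).trans (Finset.inf_le (hG.mem_toFinset.2 hxG))
  · obtain ⟨y, hy, hδy⟩ := hout x hxG hx
    exact (min_le_left _ _).trans <| hδy.trans <|
      (le_reachProbWithin_one hx hy).trans (monotone_reachProbWithin x hK)

end Attractor

/-- The increments of `B` form a geometric sequence of ratio `(1 - q) / q ≥ 0` starting at
`B 1 ≥ 0`, so `B` is monotone; a monotone sequence tending to `0` is nonpositive. -/
lemma eq_zero_of_walk_recurrence {q : ℝ} (hq0 : 0 < q) (hq1 : q ≤ 1) {B : ℕ → ℝ} (h0 : B 0 = 0)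
    (hnn : ∀ j, 0 ≤ B j) (hlim : Tendsto B atTop (𝓝 0))
    (hrec : ∀ j, B (j + 1) = q * B (j + 2) + (1 - q) * B j) (j : ℕ) : B j = 0 := by
  have hmono : Monotone B := by
    refine monotone_nat_of_le_succ fun j => ?_
    induction j with
    | zero => rw [h0]; exact hnn 1
    | succ j ih => nlinarith [hrec j]
  exact le_antisymm (hmono.ge_of_tendsto hlim j) (hnn j)

section Walk

variable {p : ℝ≥0∞}

lemma walkKernel_succ (k n : ℕ) :
    walkKernel p (k + 1) n = (if n = k + 2 then p else 0) + (if n = k then 1 - p else 0) := by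
  rw [walkKernel, if_neg k.succ_ne_zero]
  split_ifs <;> first | omega | simp

lemma tsum_walkKernel_succ_mul (g : ℕ → ℝ≥0∞) (k : ℕ) :
    ∑' n, walkKernel p (k + 1) n * g n = p * g (k + 2) + (1 - p) * g k := by
  simp [walkKernel_succ, add_mul, ite_mul, ENNReal.tsum_add]

lemma isStochastic_walkKernel (hp : p ≤ 1) : IsStochastic (walkKernel p)
  | 0 => by simp [walkKernel]
  | k + 1 => by simpa [add_tsub_cancel_of_le hp] using tsum_walkKernel_succ_mul (p := p) 1 k

lemma walk_ratio_lt_one (hp : 1 / 2 < p) : (1 - p) / p < 1 := by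
  have hp0 : p ≠ 0 := (pos_of_gt hp).ne'
  have h2 : 1 < p + p := by
    rw [← two_mul, mul_comm]
    exact (ENNReal.div_lt_iff (Or.inl two_ne_zero) (Or.inl ENNReal.ofNat_ne_top)).1 hp
  rw [ENNReal.div_lt_iff (Or.inl hp0) (Or.inr (by simp)), one_mul]
  rcases le_total p 1 with h | h
  · exact ENNReal.sub_lt_of_lt_add h h2
  · simpa [tsub_eq_zero_of_le h] using hp0.bot_lt

lemma walk_ratio_pow_recurrence (hp0 : p ≠ 0) (hp : p ≤ 1) (j : ℕ) :
    p * ((1 - p) / p) ^ (j + 2) + (1 - p) * ((1 - p) / p) ^ j = ((1 - p) / p) ^ (j + 1) := by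
  set r := (1 - p) / p
  have hpr : p * r = 1 - p := ENNReal.mul_div_cancel hp0 (ne_top_of_le_ne_top ENNReal.one_ne_top hp)
  calc p * r ^ (j + 2) + (1 - p) * r ^ j = (p * r + p) * r ^ (j + 1) := by rw [← hpr]; ring
    _ = r ^ (j + 1) := by rw [hpr, tsub_add_cancel_of_le hp, one_mul]

lemma reachProb_walkKernel_le (hp0 : p ≠ 0) (hp : p ≤ 1) (N₀ n : ℕ) :
    reachProb (walkKernel p) (Set.Iic N₀) n ≤ ((1 - p) / p) ^ (n - N₀) := by
  refine reachProb_le_of_superharmonic (g := fun m => ((1 - p) / p) ^ (m - N₀))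
    (fun m hm => ?_) (fun m hm => ?_) n
  · rw [Nat.sub_eq_zero_of_le hm, pow_zero]
  · obtain ⟨k, rfl⟩ := Nat.exists_eq_add_of_lt (not_le.1 hm)
    rw [tsum_walkKernel_succ_mul, show N₀ + k + 2 - N₀ = k + 2 by omega,
      show N₀ + k + 1 - N₀ = k + 1 by omega, show N₀ + k - N₀ = k by omega]
    exact (walk_ratio_pow_recurrence hp0 hp k).le

/-- Gambler's ruin: the superharmonic bound is attained, because the gap between the two
solutions of the recurrence is nonnegative, vanishes at `N₀` and tends to `0`. -/
theorem reachProb_walkKernel (hp1 : 1 / 2 < p) (hp : p < 1) (N₀ n : ℕ) :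
    reachProb (walkKernel p) (Set.Iic N₀) n = ((1 - p) / p) ^ (n - N₀) := by
  set f := reachProb (walkKernel p) (Set.Iic N₀)
  set r := (1 - p) / p
  have hp0 : p ≠ 0 := (pos_of_gt hp1).ne'
  have hr : r < 1 := walk_ratio_lt_one hp1
  have hfin : ∀ n, f n ≠ ⊤ := fun n =>
    ne_top_of_le_ne_top ENNReal.one_ne_top (reachProb_le_one (isStochastic_walkKernel hp.le) n)
  have hrfin : ∀ j, r ^ j ≠ ⊤ := fun j => ENNReal.pow_ne_top (hr.trans ENNReal.one_lt_top).ne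
  rcases le_or_gt n N₀ with hn | hn
  · rw [Nat.sub_eq_zero_of_le hn, pow_zero]
    exact reachProb_of_mem (Set.mem_Iic.2 hn)
  obtain ⟨m, rfl⟩ := Nat.exists_eq_add_of_le hn.le
  rw [Nat.add_sub_cancel_left]
  have hle : ∀ j, f (N₀ + j) ≤ r ^ j := fun j => by
    simpa using reachProb_walkKernel_le hp0 hp.le N₀ (N₀ + j)
  set B : ℕ → ℝ := fun j => (r ^ j).toReal - (f (N₀ + j)).toReal
  have hB0 : B 0 = 0 := by simp [B, f, reachProb_of_mem (Set.mem_Iic.2 le_rfl)]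
  have hBnn : ∀ j, 0 ≤ B j := fun j => sub_nonneg.2 (ENNReal.toReal_mono (hrfin j) (hle j))
  have hBlim : Tendsto B atTop (𝓝 0) := by
    refine squeeze_zero hBnn (fun j => sub_le_self _ ENNReal.toReal_nonneg) ?_
    simpa only [ENNReal.toReal_pow] using tendsto_pow_atTop_nhds_zero_of_lt_one
      ENNReal.toReal_nonneg (ENNReal.toReal_lt_of_lt_ofReal (by simpa using hr))
  have hBrec : ∀ j, B (j + 1) = p.toReal * B (j + 2) + (1 - p.toReal) * B j := fun j => by
    have hf := ENNReal.toReal_convex_comb hp.le (hfin _) (hfin _)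
      ((reachProb_eq_tsum (show N₀ + (j + 1) ∉ Set.Iic N₀ by simp)).trans
        (tsum_walkKernel_succ_mul f (N₀ + j)))
    have hg := ENNReal.toReal_convex_comb hp.le (hrfin _) (hrfin _)
      (walk_ratio_pow_recurrence hp0 hp.le j).symm
    simp only [B, ← add_assoc] at hf ⊢
    linear_combination hg - hf
  have hBm := eq_zero_of_walk_recurrence (ENNReal.toReal_pos hp0 (hp.trans ENNReal.one_lt_top).ne)
    (ENNReal.toReal_le_of_le_ofReal zero_le_one (by simpa using hp.le)) hB0 hBnn hBlim hBrec m
  exact (ENNReal.toReal_eq_toReal_iff' (hfin _) (hrfin m)).1 (by linarith)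

end Walk

section Layered

variable {S : Type*} {P : S → S → ℝ≥0∞} {lam : S → ℕ}

lemma tsum_mul_eq_levels (hstep : ∀ s s', 0 < P s s' → (lam s : ℤ) ≤ (lam s' : ℤ) + 1)
    (φ : S → ℝ≥0∞) (s : S) :
    ∑' s', P s s' * φ s' = ∑' s' : {s' // lam s' = lam s}, P s s' * φ s'
      + ∑' s' : {s' // lam s' + 1 = lam s}, P s s' * φ s'
      + ∑' s' : {s' // lam s < lam s'}, P s s' * φ s' := by
  have h : ∀ s', P s s' * φ s' = {s' | lam s' = lam s}.indicator (fun s' => P s s' * φ s') s'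
      + {s' | lam s' + 1 = lam s}.indicator (fun s' => P s s' * φ s') s'
      + {s' | lam s < lam s'}.indicator (fun s' => P s s' * φ s') s' := by
    intro s'
    have hP : lam s' + 1 < lam s → P s s' = 0 := fun hlt =>
      le_zero_iff.1 <| not_lt.1 fun hpos => by have := hstep s s' hpos; omega
    simp only [Set.indicator_apply, Set.mem_ofPred_eq]
    split_ifs <;> first | omega | simp [hP (by omega)] | simp
  rw [tsum_congr h, ENNReal.tsum_add, ENNReal.tsum_add, ← tsum_subtype, ← tsum_subtype,
    ← tsum_subtype]
  rfl

lemma Peq_add_Pdown_add_Pup (hP : IsStochastic P)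
    (hstep : ∀ s s', 0 < P s s' → (lam s : ℤ) ≤ (lam s' : ℤ) + 1) (s : S) :
    Peq P lam s + Pdown P lam s + Pup P lam s = 1 := by
  simpa [Peq, Pdown, Pup, hP s] using (tsum_mul_eq_levels hstep 1 s).symm

lemma tsum_mul_le_levels (hstep : ∀ s s', 0 < P s s' → (lam s : ℤ) ≤ (lam s' : ℤ) + 1)
    {g : ℕ → ℝ≥0∞} (hg : Antitone g) (s : S) :
    ∑' s', P s s' * g (lam s') ≤
      Peq P lam s * g (lam s) + Pdown P lam s * g (lam s - 1) + Pup P lam s * g (lam s + 1) := by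
  rw [tsum_mul_eq_levels hstep]
  simp only [Peq, Pdown, Pup, ← ENNReal.tsum_mul_right]
  gcongr with s' s' s'
  · rw [s'.2]
  · exact le_of_eq (congrArg g (by have := s'.2; omega))
  · exact hg s'.2

lemma Divergent.mul_le_Pup {pplus : ℝ≥0∞} {N₀ : ℕ} (hdiv : Divergent P lam pplus N₀)
    (hP : IsStochastic P) (hstep : ∀ s s', 0 < P s s' → (lam s : ℤ) ≤ (lam s' : ℤ) + 1)
    {s : S} (hs : N₀ < lam s) : pplus * (Pdown P lam s + Pup P lam s) ≤ Pup P lam s := by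
  have hsum := Peq_add_Pdown_add_Pup hP hstep s
  rw [add_assoc] at hsum
  by_cases h0 : Pdown P lam s + Pup P lam s = 0
  · simp [h0]
  have hlt : Peq P lam s < 1 := hsum ▸ ENNReal.lt_add_right
    (ne_top_of_le_ne_top ENNReal.one_ne_top (hsum ▸ le_self_add)) h0
  exact (ENNReal.le_div_iff_mul_le (Or.inl h0)
    (Or.inl (ne_top_of_le_ne_top ENNReal.one_ne_top (hsum ▸ le_add_self)))).1 (hdiv.2 s hs hlt)

lemma IsLMC.finite_setOf_le {S : Type*} {P : S → S → ℝ≥0∞} {lam : S → ℕ} (hlmc : IsLMC P lam)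
    (N : ℕ) : {s | lam s ≤ N}.Finite :=
  (Set.finite_Iic N).preimage' fun n _ => hlmc.2 n

end Layered

noncomputable def monotonyConst (p pplus : ℝ≥0∞) : ℝ≥0∞ :=
  ENNReal.ofReal ((2 * p.toReal - 1) * (pplus.toReal - p.toReal) / ((1 - p.toReal) * p.toReal))

lemma monotonyConst_pos {p pplus : ℝ≥0∞} (hp1 : 1 / 2 < p) (hp : p < 1) (hpp : p < pplus)
    (hpp1 : pplus ≠ ⊤) : 0 < monotonyConst p pplus := by
  have hpt : p ≠ ⊤ := (hp.trans ENNReal.one_lt_top).ne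
  have hreal : (1 / 2 : ℝ) < p.toReal := by
    simpa using ENNReal.toReal_strict_mono hpt hp1
  have hp1' : p.toReal < 1 := by simpa using ENNReal.toReal_strict_mono ENNReal.one_ne_top hp
  have hpp' : p.toReal < pplus.toReal := ENNReal.toReal_strict_mono hpp1 hpp
  exact ENNReal.ofReal_pos.2 (div_pos (mul_pos (by linarith) (by linarith))
    (mul_pos (by linarith) (by linarith)))

lemma monotony_real {p pp e d u : ℝ} (hhalf : 1 / 2 ≤ p) (hp1 : p < 1)
    (hsum : e + d + u = 1) (hdiv : pp * (d + u) ≤ u) :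
    e * ((1 - p) / p) + d + u * ((1 - p) / p) ^ 2
      + (2 * p - 1) * (pp - p) / ((1 - p) * p) * (d + u) * ((1 - p) / p) ≤ (1 - p) / p := by
  have hp : 0 < p := by linarith
  set ρ := (1 - p) / p
  have hρ : ρ ^ 2 ≤ 1 := by
    rw [sq, ← one_mul 1]
    have : ρ ≤ 1 := by rw [div_le_one hp]; linarith
    exact mul_le_mul this this (div_nonneg (by linarith) hp.le) zero_le_one
  have hident :
      (1 - pp) * (1 - ρ ^ 2) + ρ ^ 2 + (2 * p - 1) * (pp - p) / ((1 - p) * p) * ρ = ρ := by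
    simp only [ρ]
    field_simp [(by linarith : (1 - p) ≠ 0)]
    ring
  clear_value ρ
  have hd' : d * (1 - ρ ^ 2) ≤ (1 - pp) * (d + u) * (1 - ρ ^ 2) :=
    mul_le_mul_of_nonneg_right (by linarith) (by linarith)
  linear_combination hd' + (d + u) * hident + ρ * hsum

lemma monotony_ennreal {p pplus e d u : ℝ≥0∞} (hp1 : 1 / 2 < p) (hp : p < 1) (hpp : p ≤ pplus)
    (hpp1 : pplus ≠ ⊤) (hsum : e + d + u = 1) (hdiv : pplus * (d + u) ≤ u) :
    e * ((1 - p) / p) + d + u * ((1 - p) / p) ^ 2 + monotonyConst p pplus * (d + u) * ((1 - p) / p)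
      ≤ (1 - p) / p := by
  have hp0 : p ≠ 0 := (pos_of_gt hp1).ne'
  have hpt : p ≠ ⊤ := (hp.trans ENNReal.one_lt_top).ne
  have he : e ≠ ⊤ := ne_top_of_le_ne_top ENNReal.one_ne_top (hsum ▸ le_self_add.trans le_self_add)
  have hd : d ≠ ⊤ := ne_top_of_le_ne_top ENNReal.one_ne_top (hsum ▸ le_add_self.trans le_self_add)
  have hu : u ≠ ⊤ := ne_top_of_le_ne_top ENNReal.one_ne_top (hsum ▸ le_add_self)
  have hr : (1 - p) / p ≠ ⊤ := ENNReal.div_ne_top (by simp) hp0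
  have hreal : (1 / 2 : ℝ) ≤ p.toReal := by simpa using ENNReal.toReal_mono hpt hp1.le
  have hp1' : p.toReal < 1 := by simpa using ENNReal.toReal_strict_mono ENNReal.one_ne_top hp
  have hpp' : p.toReal ≤ pplus.toReal := ENNReal.toReal_mono hpp1 hpp
  have hrr : ((1 - p) / p).toReal = (1 - p.toReal) / p.toReal := by
    rw [ENNReal.toReal_div, ENNReal.toReal_sub_of_le hp.le ENNReal.one_ne_top, ENNReal.toReal_one]
  have hνr : (monotonyConst p pplus).toReal
      = (2 * p.toReal - 1) * (pplus.toReal - p.toReal) / ((1 - p.toReal) * p.toReal) :=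
    ENNReal.toReal_ofReal (div_nonneg (mul_nonneg (by linarith) (by linarith))
      (mul_nonneg (by linarith) (by linarith)))
  have hν : monotonyConst p pplus ≠ ⊤ := ENNReal.ofReal_ne_top
  generalize (1 - p) / p = r at hr hrr ⊢
  generalize monotonyConst p pplus = ν at hν hνr ⊢
  rw [← ENNReal.toReal_le_toReal (by finiteness) hr]
  simp (disch := finiteness) only [ENNReal.toReal_add, ENNReal.toReal_mul, ENNReal.toReal_pow,
    hrr, hνr]
  refine monotony_real hreal hp1' ?_ ?_
  · simpa (disch := finiteness) [ENNReal.toReal_add] using congrArg ENNReal.toReal hsum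
  · simpa (disch := finiteness) [ENNReal.toReal_add, ENNReal.toReal_mul]
      using ENNReal.toReal_mono hu hdiv

section Biased

variable {S : Type*} {P : S → S → ℝ≥0∞} {F : Set S} {S' : Type*} {P' : S' → S' → ℝ≥0∞}
  {F' : Set S'} {α : SA P F → S'}

lemma tsum_biasedKernel_some (s : SA P F) :
    ∑' s', biasedKernel P F P' F' α (some s) (some s') = hRatio P F P' F' α s := by
  simp only [biasedKernel, hRatio, div_eq_mul_inv, ENNReal.tsum_mul_right]

lemma isStochastic_biasedKernel (h : ∀ s, hRatio P F P' F' α s ≤ 1) :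
    IsStochastic (biasedKernel P F P' F' α)
  | none => by simp [ENNReal.tsum_option, biasedKernel]
  | some s => by
    rw [ENNReal.tsum_option, tsum_biasedKernel_some]
    exact tsub_add_cancel_of_le (h s)

lemma none_mem_av_biasedKernel (hP : IsStochastic (biasedKernel P F P' F' α))
    {T : Set (Option (SA P F))} (hT : none ∉ T) : none ∈ Av (biasedKernel P F P' F' α) T :=
  reachProb_eq_zero_of_closed hP (A := {none})
    (by rintro _ rfl (_ | b) hb; exacts [absurd rfl hb, rfl]) (Set.disjoint_singleton_left.2 hT) rfl

end Biased

section WalkAbstraction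

variable {S : Type*} {P : S → S → ℝ≥0∞} {lam : S → ℕ} {F : Set S} {p : ℝ≥0∞} {N₀ : ℕ}

lemma hRatio_walkKernel_le_one (hP : IsStochastic P) (hp : p ≤ 1) {s : SA P F}
    (hs : lam s.val ≤ N₀) : hRatio P F (walkKernel p) (Set.Iic N₀) (fun s => lam s.val) s ≤ 1 := by
  rw [hRatio, reachProb_of_mem (Set.mem_Iic.2 hs), div_one]
  exact (ENNReal.tsum_comp_le_tsum_of_injective Subtype.val_injective
    (fun s' => P s s' * reachProb (walkKernel p) (Set.Iic N₀) (lam s'))).trans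
    (tsum_mul_le_one hP (fun _ => reachProb_le_one (isStochastic_walkKernel hp) _) s)

/-- The strengthened monotony estimate `1 - h(s) ≥ ν (P⁻(s) + P⁺(s))`. -/
theorem hRatio_walkKernel_add_le {pplus : ℝ≥0∞} (hP : IsStochastic P)
    (hstep : ∀ s s', 0 < P s s' → (lam s : ℤ) ≤ (lam s' : ℤ) + 1)
    (hdiv : Divergent P lam pplus N₀) (hple : pplus ≤ 1) (hp1 : 1 / 2 < p) (hp : p < 1)
    (hpp : p ≤ pplus) {s : SA P F} (hs : N₀ < lam s.val) :
    hRatio P F (walkKernel p) (Set.Iic N₀) (fun s => lam s.val) s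
      + monotonyConst p pplus * (Pdown P lam s.val + Pup P lam s.val) ≤ 1 := by
  obtain ⟨k, hk⟩ := Nat.exists_eq_add_of_lt hs
  simp only [hRatio, reachProb_walkKernel hp1 hp]
  rw [hk, show N₀ + k + 1 - N₀ = k + 1 by omega]
  set r := (1 - p) / p
  have hr1 : r < 1 := walk_ratio_lt_one hp1
  have hr0 : r ≠ 0 :=
    ENNReal.div_ne_zero.2 ⟨(tsub_pos_of_lt hp).ne', (hp.trans ENNReal.one_lt_top).ne⟩
  have hanti : Antitone fun n => r ^ (n - N₀) := fun _ _ hmn =>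
    pow_le_pow_of_le_one zero_le hr1.le (Nat.sub_le_sub_right hmn N₀)
  have hnum : ∑' s' : SA P F, P s.val s'.val * r ^ (lam s'.val - N₀)
      ≤ Peq P lam s.val * r ^ (k + 1) + Pdown P lam s.val * r ^ k
        + Pup P lam s.val * r ^ (k + 2) := by
    refine (ENNReal.tsum_comp_le_tsum_of_injective Subtype.val_injective
      (fun s' => P s.val s' * r ^ (lam s' - N₀))).trans
      ((tsum_mul_le_levels hstep hanti _).trans_eq ?_)
    rw [hk, show N₀ + k + 1 - N₀ = k + 1 by omega, show N₀ + k + 1 - 1 - N₀ = k by omega,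
      show N₀ + k + 1 + 1 - N₀ = k + 2 by omega]
  refine ENNReal.div_add_le_one (pow_ne_zero _ hr0)
    (ENNReal.pow_ne_top (hr1.trans ENNReal.one_lt_top).ne) ?_
  have hmono := monotony_ennreal hp1 hp hpp (ne_top_of_le_ne_top ENNReal.one_ne_top hple)
    (Peq_add_Pdown_add_Pup hP hstep s.val) (hdiv.mul_le_Pup hP hstep hs)
  calc _ ≤ Peq P lam s.val * r ^ (k + 1) + Pdown P lam s.val * r ^ k
        + Pup P lam s.val * r ^ (k + 2)
        + monotonyConst p pplus * (Pdown P lam s.val + Pup P lam s.val) * r ^ (k + 1) := by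
        gcongr
    _ = (Peq P lam s.val * r + Pdown P lam s.val + Pup P lam s.val * r ^ 2
        + monotonyConst p pplus * (Pdown P lam s.val + Pup P lam s.val) * r) * r ^ k := by ring
    _ ≤ r * r ^ k := by gcongr
    _ = r ^ (k + 1) := (pow_succ' r k).symm

end WalkAbstraction

open scoped Classical

section Thms

variable {S : Type*}

theorem stmt15_general (P : S → S → ℝ≥0∞) (hP : IsStochastic P)
    (lam : S → ℕ) (hlmc : IsLMC P lam)
    (pplus p : ℝ≥0∞) (N₀ : ℕ) (hdiv : Divergent P lam pplus N₀)
    (hple : pplus ≤ 1) (hp1 : 1/2 < p) (hp2 : p < pplus)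
    (c : ℝ≥0∞) (hc : 0 < c) (hinf : ∀ s : S, N₀ < lam s → c ≤ Pup P lam s) :
    ∀ T : Set S, T ⊆ {s : S | lam s ≤ N₀} →
      let F : Set S := {s : S | lam s ≤ N₀}
      let bk := biasedKernel P F (walkKernel p) (Set.Iic N₀)
        (fun s => lam s.val)
      let T' : Set (Option (SA P F)) :=
        {y | ∃ u : SA P F, y = some u ∧ u.val ∈ T}
      ∀ x, reachProb bk (T' ∪ Av bk T') x = 1 ∧
        expHittingTime bk (T' ∪ Av bk T') x < ⊤ := by
  intro T _ F bk T'
  have hp : p < 1 := hp2.trans_le hple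
  have hδ : 0 < monotonyConst p pplus * c := ENNReal.mul_pos
    (monotonyConst_pos hp1 hp hp2 (ne_top_of_le_ne_top ENNReal.one_ne_top hple)).ne' hc.ne'
  have hhigh : ∀ s : SA P F, N₀ < lam s.val →
      hRatio P F (walkKernel p) (Set.Iic N₀) (fun s => lam s.val) s
        + monotonyConst p pplus * c ≤ 1 :=
    fun s hs => le_trans (by gcongr; exact (hinf s hs).trans le_add_self)
      (hRatio_walkKernel_add_le hP hlmc.1 hdiv hple hp1 hp hp2.le hs)
  have hbk : IsStochastic bk := isStochastic_biasedKernel fun s =>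
    (le_or_gt (lam s.val) N₀).elim (hRatio_walkKernel_le_one hP hp.le)
      fun hs => le_self_add.trans (hhigh s hs)
  have hnone : none ∈ Av bk T' := none_mem_av_biasedKernel hbk fun ⟨_, hu, _⟩ => nomatch hu
  have hlow : (some '' {s : SA P F | lam s.val ≤ N₀}).Finite :=
    ((hlmc.finite_setOf_le N₀).preimage Subtype.val_injective.injOn).image some
  refine reachProb_eq_one_and_expHittingTime_lt_top_of_finite hbk hlow hδ ?_
  rintro (_ | s) hG hR
  · exact absurd (Or.inr hnone) hR
  · have hs : N₀ < lam s.val := not_le.1 fun h => hG ⟨s, h, rfl⟩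
    exact ⟨none, Or.inr hnone, ENNReal.le_sub_of_add_le_left
      (ne_top_of_le_ne_top ENNReal.one_ne_top (le_self_add.trans (hhigh s hs))) (hhigh s hs)⟩

theorem stmt15 [Countable S] (P : S → S → ℝ≥0∞) (hP : IsStochastic P)
    (lam : S → ℕ) (hlmc : IsLMC P lam)
    (pplus p : ℝ≥0∞) (N₀ : ℕ) (hdiv : Divergent P lam pplus N₀)
    (hple : pplus ≤ 1) (hp1 : 1/2 < p) (hp2 : p < pplus)
    (c : ℝ≥0∞) (hc : 0 < c) (hinf : ∀ s : S, N₀ < lam s → c ≤ Pup P lam s) :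
    ∀ T : Set S, T ⊆ {s : S | lam s ≤ N₀} →
      let F : Set S := {s : S | lam s ≤ N₀}
      let bk := biasedKernel P F (walkKernel p) (Set.Iic N₀)
        (fun s => lam s.val)
      let T' : Set (Option (SA P F)) :=
        {y | ∃ u : SA P F, y = some u ∧ u.val ∈ T}
      ∀ x, reachProb bk (T' ∪ Av bk T') x = 1 ∧
        expHittingTime bk (T' ∪ Av bk T') x < ⊤ :=
  stmt15_general P hP lam hlmc pplus p N₀ hdiv hple hp1 hp2 c hc hinf

end Thms
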